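/- arXiv:1710.04273 — 7 statements merged into one kernel-verified Lean document; each statement's English description precedes it below -/
import Mathlib

section
/- Let k ≥ 1, C > 0, C_α > 0, and set α_t = C_α/t for t ≥ 1. Let A : [1, ∞) → ℝ^{k×k} be continuous with zᵀ A(t) z ≥ C‖z‖² for every z ∈ ℝ^k and every t ≥ 1. Fix s ≥ 1 and let Φ : [s, ∞) → ℝ^{k×k} be differentiable with Φ(s) = I (the identity matrix) and Φ′(t) = −α_t A(t) Φ(t) for all t ≥ s. Then for all t ≥ s one has ‖Φ(t)‖² ≤ k (s/t)^{2 C C_α}. -/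
/-!
Differentiating, `d/dt ‖Φ‖² = -2 α_t ∑ⱼ φⱼᵀ A φⱼ` where `φⱼ` are the columns of `Φ`; coercivity
of `A` applied to each column bounds this by `-(2 C C_α / t) ‖Φ‖²`. Hence `t ^ (2 C C_α) ‖Φ t‖²`
is nonincreasing on `[s, ∞)`, and its value at `s` is `s ^ (2 C C_α) ‖I‖² = s ^ (2 C C_α) k`.
-/

attribute [local instance] Matrix.frobeniusNormedAddCommGroup Matrix.frobeniusNormedSpace

open Set

theorem le_mul_div_rpow_of_hasDerivWithinAt_le {g g' : ℝ → ℝ} {s p : ℝ} (hs : 0 < s)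
    (hg : ∀ t ∈ Ici s, HasDerivWithinAt g (g' t) (Ici s) t)
    (hg' : ∀ t ∈ Ioi s, g' t ≤ -(p / t) * g t) {t : ℝ} (ht : t ∈ Ici s) :
    g t ≤ g s * (s / t) ^ p := by
  have hpos : ∀ u ∈ Ici s, 0 < u := fun u hu => hs.trans_le hu
  have hanti : AntitoneOn (fun u => u ^ p * g u) (Ici s) := by
    refine antitoneOn_of_hasDerivWithinAt_nonpos (convex_Ici s)
      (f' := fun u => p * u ^ (p - 1) * g u + u ^ p * g' u) ?_ ?_ ?_
    · intro u hu
      exact ((Real.continuousAt_rpow_const u p (Or.inl (hpos u hu).ne')).continuousWithinAt).mul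
        (hg u hu).continuousWithinAt
    · rw [interior_Ici]
      intro u hu
      exact ((Real.hasDerivAt_rpow_const (Or.inl (hs.trans hu).ne')).hasDerivWithinAt).mul
        ((hg u (Ioi_subset_Ici_self hu)).mono Ioi_subset_Ici_self)
    · rw [interior_Ici]
      intro u hu
      have hu0 : 0 < u := hs.trans hu
      have hpow : u ^ (p - 1) = u ^ p / u := by rw [Real.rpow_sub hu0, Real.rpow_one]
      calc p * u ^ (p - 1) * g u + u ^ p * g' u
          ≤ p * u ^ (p - 1) * g u + u ^ p * (-(p / u) * g u) := by
            gcongr; exact hg' u hu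
        _ = 0 := by rw [hpow]; field_simp; ring
  have hmono : t ^ p * g t ≤ s ^ p * g s := hanti self_mem_Ici ht ht
  have htp : 0 < t ^ p := Real.rpow_pos_of_pos (hpos t ht) p
  rw [Real.div_rpow hs.le (hpos t ht).le, mul_div_assoc', le_div_iff₀ htp]
  linarith

theorem Matrix.frobenius_norm_sq_eq_sum_sq {m n : Type*} [Fintype m] [Fintype n]
    (M : Matrix m n ℝ) : ‖M‖ ^ 2 = ∑ i, ∑ j, M i j ^ 2 := by
  change ‖WithLp.toLp 2 fun i => WithLp.toLp 2 fun j => M i j‖ ^ 2 = _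
  simp [PiLp.norm_sq_eq_of_L2]

theorem Matrix.frobenius_norm_one_sq {n : Type*} [Fintype n] [DecidableEq n] :
    ‖(1 : Matrix n n ℝ)‖ ^ 2 = Fintype.card n := by
  simp [Matrix.frobenius_norm_sq_eq_sum_sq, Matrix.one_apply]

theorem HasDerivWithinAt.frobenius_norm_sq {m n : Type*} [Fintype m] [Fintype n]
    {Φ : ℝ → Matrix m n ℝ} {Φ' : Matrix m n ℝ} {S : Set ℝ} {t : ℝ}
    (h : HasDerivWithinAt Φ Φ' S t) :
    HasDerivWithinAt (fun u => ‖Φ u‖ ^ 2) (2 * ∑ i, ∑ j, Φ t i j * Φ' i j) S t := by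
  have hentry : ∀ i j, HasDerivWithinAt (fun u => Φ u i j) (Φ' i j) S t := fun i j =>
    (Matrix.entryLinearMap ℝ ℝ i j).toContinuousLinearMap.hasFDerivAt.comp_hasDerivWithinAt t h
  simp_rw [Matrix.frobenius_norm_sq_eq_sum_sq, Finset.mul_sum]
  exact HasDerivWithinAt.fun_sum fun i _ => HasDerivWithinAt.fun_sum fun j _ =>
    ((hentry i j).fun_pow 2).congr_deriv (by ring)

theorem Matrix.mul_frobenius_norm_sq_le_sum_mul_mul_apply {m n : Type*} [Fintype m] [Fintype n]
    {A : Matrix m m ℝ} {C : ℝ}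
    (hA : ∀ z : EuclideanSpace ℝ m, C * ‖z‖ ^ 2 ≤ ∑ i, ∑ j, z i * A i j * z j)
    (M : Matrix m n ℝ) : C * ‖M‖ ^ 2 ≤ ∑ i, ∑ j, M i j * (A * M) i j := by
  have hcol : ∀ j, C * ∑ i, M i j ^ 2 ≤ ∑ i, ∑ l, M i j * A i l * M l j := by
    intro j
    simpa [EuclideanSpace.norm_sq_eq] using hA (WithLp.toLp 2 fun i => M i j)
  calc C * ‖M‖ ^ 2 = ∑ j, C * ∑ i, M i j ^ 2 := by
        rw [Matrix.frobenius_norm_sq_eq_sum_sq, Finset.sum_comm, Finset.mul_sum]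
    _ ≤ ∑ j, ∑ i, ∑ l, M i j * A i l * M l j := Finset.sum_le_sum fun j _ => hcol j
    _ = ∑ i, ∑ j, M i j * (A * M) i j := by
        rw [Finset.sum_comm]
        simp only [Matrix.mul_apply, Finset.mul_sum, mul_assoc]

theorem stmt1_general (k : ℕ) (C Cα : ℝ) (hCα : 0 < Cα)
    (A : ℝ → Matrix (Fin k) (Fin k) ℝ)
    (hA : ∀ t ∈ Set.Ici (1 : ℝ), ∀ z : EuclideanSpace ℝ (Fin k),
      C * ‖z‖ ^ 2 ≤ ∑ i, ∑ j, z i * A t i j * z j)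
    (s : ℝ) (hs : 1 ≤ s)
    (Φ : ℝ → Matrix (Fin k) (Fin k) ℝ)
    (hΦs : Φ s = 1)
    (hΦ : ∀ t ∈ Set.Ici s, HasDerivWithinAt Φ (-((Cα / t) • (A t * Φ t))) (Set.Ici s) t) :
    ∀ t ∈ Set.Ici s, ‖Φ t‖ ^ 2 ≤ (k : ℝ) * (s / t) ^ (2 * C * Cα) := by
  have hs0 : 0 < s := by linarith
  have hdissipation : ∀ u ∈ Ioi s,
      2 * ∑ i, ∑ j, Φ u i j * (-((Cα / u) • (A u * Φ u))) i j ≤ -(2 * C * Cα / u) * ‖Φ u‖ ^ 2 := by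
    intro u hu
    have hrate : 0 ≤ 2 * Cα / u := by have := hs0.trans hu; positivity
    calc 2 * ∑ i, ∑ j, Φ u i j * (-((Cα / u) • (A u * Φ u))) i j
        = -(2 * Cα / u) * ∑ i, ∑ j, Φ u i j * (A u * Φ u) i j := by
          simp only [Matrix.neg_apply, Matrix.smul_apply, smul_eq_mul, Finset.mul_sum]
          exact Finset.sum_congr rfl fun i _ => Finset.sum_congr rfl fun j _ => by ring
      _ ≤ -(2 * Cα / u) * (C * ‖Φ u‖ ^ 2) :=
          mul_le_mul_of_nonpos_left
            (Matrix.mul_frobenius_norm_sq_le_sum_mul_mul_apply (hA u (hs.trans hu.le)) (Φ u))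
            (neg_nonpos.mpr hrate)
      _ = -(2 * C * Cα / u) * ‖Φ u‖ ^ 2 := by ring
  intro t ht
  have hdecay := le_mul_div_rpow_of_hasDerivWithinAt_le hs0
    (fun u hu => (hΦ u hu).frobenius_norm_sq) hdissipation ht
  rwa [hΦs, Matrix.frobenius_norm_one_sq, Fintype.card_fin] at hdecay

/-- Power-law decay `‖Φ_{t,s}‖² ≤ k (s/t)^{2CC_α}` of the Frobenius norm of
the fundamental solution of `dΦ = −α_t A(t) Φ dt`, `Φ(s) = I`, with learning rate
`α_t = C_α/t` and `zᵀ A(t) z ≥ C‖z‖²`. -/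
theorem stmt1 (k : ℕ) (hk : 1 ≤ k) (C Cα : ℝ) (hC : 0 < C) (hCα : 0 < Cα)
    (A : ℝ → Matrix (Fin k) (Fin k) ℝ)
    (hAcont : ContinuousOn A (Set.Ici 1))
    (hA : ∀ t ∈ Set.Ici (1 : ℝ), ∀ z : EuclideanSpace ℝ (Fin k),
      C * ‖z‖ ^ 2 ≤ ∑ i, ∑ j, z i * A t i j * z j)
    (s : ℝ) (hs : 1 ≤ s)
    (Φ : ℝ → Matrix (Fin k) (Fin k) ℝ)
    (hΦs : Φ s = 1)
    (hΦ : ∀ t ∈ Set.Ici s, HasDerivWithinAt Φ (-((Cα / t) • (A t * Φ t))) (Set.Ici s) t) :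
    ∀ t ∈ Set.Ici s, ‖Φ t‖ ^ 2 ≤ (k : ℝ) * (s / t) ^ (2 * C * Cα) :=
  stmt1_general k C Cα hCα A hA s hs Φ hΦs hΦ
end

section
/- Let k ≥ 1, C > 0, C_α > 0 with 2 C C_α > 1, let A be a symmetric real k×k matrix with zᵀ A z ≥ C‖z‖² for all z ∈ ℝ^k, and let H be any real k×k matrix. Then the function u ↦ e^{u} exp(−C_α u A) · H · exp(−C_α u A) is Bochner integrable on [0, ∞), and, writing Σ̄ = C_α² ∫_0^∞ e^{u} exp(−C_α u A) · H · exp(−C_α u A) du, one has lim_{t→∞} t ∫_1^t (C_α/s)² exp(−C_α log(t/s) A) · H · exp(−C_α log(t/s) A) ds = Σ̄. -/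
attribute [local instance] Matrix.frobeniusNormedAddCommGroup Matrix.frobeniusNormedSpace

open NormedSpace MeasureTheory

/-!
Coercivity of `A` gives `d/dt |e^{-tA} x|² = -2 ⟪e^{-tA} x, A e^{-tA} x⟫ ≤ -2C |e^{-tA} x|²`, so by
Grönwall each column of `e^{-tA}` decays like `e^{-Ct}` and `‖e^{-tA}‖² ≤ k e^{-2Ct}`. The integrand
`e^u e^{-C_α u A} H e^{-C_α u A}` is then `O(e^{-(2CC_α - 1)u})`, hence integrable on `[0, ∞)`.
The substitution `u = log (t / s)` turns `t ∫_1^t (C_α/s)² F(log (t/s)) ds` into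
`C_α² ∫_0^{log t} e^u F(u) du`, which converges to `Σ̄` as `log t → ∞`.
-/

open Matrix

theorem HasDerivAt.dotProduct {𝕜 ι : Type*} [NontriviallyNormedField 𝕜] [Fintype ι]
    {f g : 𝕜 → ι → 𝕜} {f' g' : ι → 𝕜} {t : 𝕜}
    (hf : HasDerivAt f f' t) (hg : HasDerivAt g g' t) :
    HasDerivAt (fun s => f s ⬝ᵥ g s) (f' ⬝ᵥ g t + f t ⬝ᵥ g') t := by
  have hsum := HasDerivAt.fun_sum (u := Finset.univ) fun i _ =>
    (hasDerivAt_pi.1 hf i).mul (hasDerivAt_pi.1 hg i)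
  exact hsum.congr_deriv Finset.sum_add_distrib

theorem frobenius_norm_sq_eq_sum_dotProduct {m n : Type*} [Fintype m] [Fintype n]
    (M : Matrix m n ℝ) : ‖M‖ ^ 2 = ∑ i, M i ⬝ᵥ M i := by
  rw [frobenius_norm_def, ← Real.sqrt_eq_rpow, Real.sq_sqrt (by positivity)]
  simp only [Real.norm_eq_abs, Real.rpow_two, sq, abs_mul_abs_self, dotProduct]

section MatrixExp

variable {ι : Type*} [Fintype ι] [DecidableEq ι]

attribute [local instance] Matrix.frobeniusNormedRing Matrix.frobeniusNormedAlgebra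

theorem hasDerivAt_exp_smul_mulVec (B : Matrix ι ι ℝ) (x : ι → ℝ) (t : ℝ) :
    HasDerivAt (fun s : ℝ => exp (s • B) *ᵥ x) (B *ᵥ (exp (t • B) *ᵥ x)) t := by
  let applyAt : Matrix ι ι ℝ →L[ℝ] ι → ℝ :=
    LinearMap.toContinuousLinearMap
      { toFun := fun M => M *ᵥ x
        map_add' := fun M N => add_mulVec M N x
        map_smul' := fun c M => smul_mulVec c M x }
  rw [mulVec_mulVec]
  exact applyAt.hasFDerivAt.comp_hasDerivAt t (hasDerivAt_exp_smul_const' B t)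

theorem dotProduct_self_exp_neg_smul_mulVec_le {A : Matrix ι ι ℝ} {C : ℝ}
    (hA : ∀ z : ι → ℝ, C * (z ⬝ᵥ z) ≤ z ⬝ᵥ (A *ᵥ z)) (x : ι → ℝ) {t : ℝ} (ht : 0 ≤ t) :
    (exp ((-t) • A) *ᵥ x) ⬝ᵥ (exp ((-t) • A) *ᵥ x) ≤ (x ⬝ᵥ x) * Real.exp (-(2 * C) * t) := by
  set y : ℝ → ι → ℝ := fun s => exp (s • -A) *ᵥ x
  have hy : ∀ s, HasDerivAt y (-(A *ᵥ y s)) s := fun s => by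
    simpa only [neg_mulVec] using hasDerivAt_exp_smul_mulVec (-A) x s
  have hg : ∀ s, HasDerivAt (fun s => y s ⬝ᵥ y s) (-(2 * (y s ⬝ᵥ (A *ᵥ y s)))) s := fun s => by
    refine ((hy s).dotProduct (hy s)).congr_deriv ?_
    rw [neg_dotProduct, dotProduct_neg, dotProduct_comm (A *ᵥ y s)]
    ring
  have gronwall := le_gronwallBound_of_liminf_deriv_right_le
    (δ := x ⬝ᵥ x) (K := -(2 * C)) (ε := 0) (a := 0) (b := t)
    (fun s _ => (hg s).continuousAt.continuousWithinAt)
    (fun s _ r hr => (hg s).hasDerivWithinAt.liminf_right_slope_le hr)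
    (by simp [y]) (fun s _ => by linarith [hA (y s)]) t ⟨ht, le_rfl⟩
  simpa only [gronwallBound_ε0, sub_zero, y, smul_neg, neg_smul] using gronwall

theorem frobenius_norm_exp_neg_smul_sq_le {A : Matrix ι ι ℝ} {C : ℝ}
    (hA : ∀ z : ι → ℝ, C * (z ⬝ᵥ z) ≤ z ⬝ᵥ (A *ᵥ z)) {t : ℝ} (ht : 0 ≤ t) :
    ‖exp ((-t) • A)‖ ^ 2 ≤ Fintype.card ι * Real.exp (-(2 * C) * t) := by
  have hcol : ∀ j, (exp ((-t) • A))ᵀ j ⬝ᵥ (exp ((-t) • A))ᵀ j ≤ Real.exp (-(2 * C) * t) :=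
    fun j => by
      simpa [← mulVec_single_one, col] using
        dotProduct_self_exp_neg_smul_mulVec_le hA (Pi.single j 1) ht
  rw [← frobenius_norm_transpose, frobenius_norm_sq_eq_sum_dotProduct]
  simpa using Finset.sum_le_sum fun j (_ : j ∈ Finset.univ) => hcol j

theorem norm_exp_neg_smul_mul_mul_le {A : Matrix ι ι ℝ} {C : ℝ}
    (hA : ∀ z : ι → ℝ, C * (z ⬝ᵥ z) ≤ z ⬝ᵥ (A *ᵥ z)) (H : Matrix ι ι ℝ) {t : ℝ} (ht : 0 ≤ t) :
    ‖exp ((-t) • A) * H * exp ((-t) • A)‖ ≤ Fintype.card ι * ‖H‖ * Real.exp (-(2 * C) * t) := by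
  set E := exp ((-t) • A)
  calc ‖E * H * E‖ ≤ ‖E‖ * ‖H‖ * ‖E‖ := by
        grw [frobenius_norm_mul, frobenius_norm_mul]
    _ = ‖E‖ ^ 2 * ‖H‖ := by ring
    _ ≤ Fintype.card ι * Real.exp (-(2 * C) * t) * ‖H‖ := by
        grw [frobenius_norm_exp_neg_smul_sq_le hA ht]
    _ = Fintype.card ι * ‖H‖ * Real.exp (-(2 * C) * t) := by ring

theorem integrableOn_Ici_exp_smul_exp_neg_smul_mul_mul {A : Matrix ι ι ℝ} {C c : ℝ}
    (hA : ∀ z : ι → ℝ, C * (z ⬝ᵥ z) ≤ z ⬝ᵥ (A *ᵥ z)) (hc : 0 ≤ c) (hCc : 1 < 2 * C * c)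
    (H : Matrix ι ι ℝ) :
    -- instance search does not find `ContinuousENorm` for the local Frobenius norm
    @IntegrableOn _ _ _ _ SeminormedAddGroup.toContinuousENorm
      (fun u : ℝ => Real.exp u • (exp ((-(c * u)) • A) * H * exp ((-(c * u)) • A)))
      (Set.Ici 0) volume := by
  have hdom : IntegrableOn
      (fun u : ℝ => Fintype.card ι * ‖H‖ * Real.exp (-(2 * C * c - 1) * u)) (Set.Ici 0) := by
    rw [integrableOn_Ici_iff_integrableOn_Ioi]
    exact (exp_neg_integrableOn_Ioi 0 (by linarith)).const_mul _
  have hexp : Continuous fun u : ℝ => exp ((-(c * u)) • A) :=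
    exp_continuous.comp ((continuous_const.mul continuous_id).neg.smul continuous_const)
  refine hdom.mono' (Continuous.aestronglyMeasurable (by fun_prop)) ?_
  refine (ae_restrict_iff' measurableSet_Ici).2 (Filter.Eventually.of_forall fun u hu => ?_)
  have hcu : 0 ≤ c * u := mul_nonneg hc hu
  calc ‖Real.exp u • (exp ((-(c * u)) • A) * H * exp ((-(c * u)) • A))‖
      ≤ Real.exp u * (Fintype.card ι * ‖H‖ * Real.exp (-(2 * C) * (c * u))) := by
        rw [norm_smul, Real.norm_of_nonneg (Real.exp_pos u).le]
        gcongr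
        exact norm_exp_neg_smul_mul_mul_le hA H hcu
    _ = Fintype.card ι * ‖H‖ * Real.exp (-(2 * C * c - 1) * u) := by
        rw [mul_left_comm, ← Real.exp_add]
        ring_nf

end MatrixExp

theorem smul_integral_div_sq_smul_comp_log_div {E : Type*} [NormedAddCommGroup E]
    [NormedSpace ℝ E] (F : ℝ → E) (c : ℝ) {t : ℝ} (ht : 0 < t) :
    t • ∫ s in (1 : ℝ)..t, (c / s) ^ 2 • F (Real.log (t / s))
      = c ^ 2 • ∫ u in (0 : ℝ)..Real.log t, Real.exp u • F u := by
  have hpos : ∀ s ∈ Set.uIcc 1 t, 0 < s := fun s hs =>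
    lt_of_lt_of_le (lt_min one_pos ht) hs.1
  have hsubst := intervalIntegral.integral_deriv_smul_comp_of_deriv_nonpos
    (f := fun s => Real.log t - Real.log s) (f' := fun s => -s⁻¹)
    (g := fun u => Real.exp u • F u) (a := 1) (b := t)
    (fun s hs =>
      (continuousAt_const.sub (Real.continuousAt_log (hpos s hs).ne')).continuousWithinAt)
    (fun s hs => ((Real.hasDerivAt_log (hpos s (Set.Ioo_subset_Icc_self hs)).ne').const_sub _)
      |>.congr_deriv (by ring))
    (fun s hs => by simpa using (hpos s (Set.Ioo_subset_Icc_self hs)).le)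
  have hintegrand : Set.EqOn (fun s => (c / s) ^ 2 • F (Real.log (t / s)))
      (fun s => (-(c ^ 2 / t)) • ((-s⁻¹) • ((fun u => Real.exp u • F u) ∘
        (fun s => Real.log t - Real.log s)) s)) (Set.uIcc 1 t) := fun s hs => by
    have hs := hpos s hs
    simp only [Function.comp, smul_smul, ← Real.log_div ht.ne' hs.ne',
      Real.exp_log (div_pos ht hs)]
    congr 1
    field_simp
  rw [intervalIntegral.integral_congr hintegrand, intervalIntegral.integral_smul, hsubst,
    Real.log_one, sub_zero, sub_self, intervalIntegral.integral_symm, smul_smul, smul_neg,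
    ← neg_smul]
  congr 1
  field_simp

theorem stmt4_general (k : ℕ) (C Cα : ℝ) (hCα : 0 < Cα)
    (h2 : 1 < 2 * C * Cα)
    (A : Matrix (Fin k) (Fin k) ℝ)
    (hA : ∀ z : EuclideanSpace ℝ (Fin k), C * ‖z‖ ^ 2 ≤ ∑ i, ∑ j, z i * A i j * z j)
    (H : Matrix (Fin k) (Fin k) ℝ) :
    @IntegrableOn _ _ _ _ SeminormedAddGroup.toContinuousENorm
      (fun u : ℝ => Real.exp u • (exp ((-(Cα * u)) • A) * H * exp ((-(Cα * u)) • A)))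
      (Set.Ici 0) volume ∧
    Filter.Tendsto
      (fun t : ℝ => t •
        ∫ s in (1 : ℝ)..t, ((Cα / s) ^ 2) •
          (exp ((-(Cα * Real.log (t / s))) • A) * H * exp ((-(Cα * Real.log (t / s))) • A)))
      Filter.atTop
      (nhds ((Cα ^ 2) •
        ∫ u in Set.Ici (0 : ℝ),
          Real.exp u • (exp ((-(Cα * u)) • A) * H * exp ((-(Cα * u)) • A)))) := by
  have hA' : ∀ z : Fin k → ℝ, C * (z ⬝ᵥ z) ≤ z ⬝ᵥ (A *ᵥ z) := fun z => by
    have hz := hA (WithLp.toLp 2 z)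
    rw [EuclideanSpace.real_norm_sq_eq] at hz
    simpa only [dotProduct, mulVec, Finset.mul_sum, sq, mul_assoc] using hz
  have hint := integrableOn_Ici_exp_smul_exp_neg_smul_mul_mul hA' hCα.le h2 H
  refine ⟨hint, ?_⟩
  have hlim := (intervalIntegral_tendsto_integral_Ioi 0 (hint.mono_set Set.Ioi_subset_Ici_self)
    Real.tendsto_log_atTop).const_smul (Cα ^ 2)
  rw [← integral_Ici_eq_integral_Ioi] at hlim
  refine hlim.congr' ?_
  filter_upwards [Filter.eventually_gt_atTop 0] with t ht
  exact (smul_integral_div_sq_smul_comp_log_div _ Cα ht).symm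

/-- Bochner integrability on `[0,∞)` of
`u ↦ e^u exp(−C_α u A) H exp(−C_α u A)` when `2CC_α > 1` and `A ≥ C > 0`, and convergence of
the finite-horizon covariance `t ∫_1^t α_s² Φ*_{t,s} H Φ*_{t,s} ds` (with `α_s = C_α/s`,
`Φ*_{t,s} = exp(−C_α log(t/s) A)`) to `Σ̄ = C_α² ∫_0^∞ e^u exp(−C_α u A) H exp(−C_α u A) du`. -/
theorem stmt4 (k : ℕ) (hk : 1 ≤ k) (C Cα : ℝ) (hC : 0 < C) (hCα : 0 < Cα)
    (h2 : 1 < 2 * C * Cα)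
    (A : Matrix (Fin k) (Fin k) ℝ) (hAsymm : A.IsSymm)
    (hA : ∀ z : EuclideanSpace ℝ (Fin k), C * ‖z‖ ^ 2 ≤ ∑ i, ∑ j, z i * A i j * z j)
    (H : Matrix (Fin k) (Fin k) ℝ) :
    @IntegrableOn _ _ _ _ SeminormedAddGroup.toContinuousENorm
      (fun u : ℝ => Real.exp u • (exp ((-(Cα * u)) • A) * H * exp ((-(Cα * u)) • A)))
      (Set.Ici 0) volume ∧
    Filter.Tendsto
      (fun t : ℝ => t •
        ∫ s in (1 : ℝ)..t, ((Cα / s) ^ 2) •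
          (exp ((-(Cα * Real.log (t / s))) • A) * H * exp ((-(Cα * Real.log (t / s))) • A)))
      Filter.atTop
      (nhds ((Cα ^ 2) •
        ∫ u in Set.Ici (0 : ℝ),
          Real.exp u • (exp ((-(Cα * u)) • A) * H * exp ((-(Cα * u)) • A)))) :=
  stmt4_general k C Cα hCα h2 A hA H
end

section
/- Let g : ℝ^k → ℝ be twice continuously differentiable and strongly convex with constant C > 0, i.e. zᵀ ∇²g(θ) z ≥ C ‖z‖² for all θ, z ∈ ℝ^k, and let θ* ∈ ℝ^k satisfy ∇g(θ*) = 0. Let C_α, C_0 > 0 and set α_t = C_α/(C_0 + t). If θ : [0, ∞) → ℝ^k is differentiable and satisfies the deterministic gradient descent equation θ′(t) = −α_t ∇g(θ(t)) for all t ≥ 0, then for all t ≥ 0, ‖θ(t) − θ*‖ ≤ (C_0/(C_0 + t))^{C C_α} ‖θ(0) − θ*‖; in particular there is a constant K < ∞ with ‖θ(t) − θ*‖ ≤ K t^{−C C_α} for all t ≥ 1. -/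
/-!
Along the flow, `u = θ - θ*` satisfies `⟪u, u'⟫ = -α_t ⟪∇g(θ) - ∇g(θ*), θ - θ*⟫ ≤ -C α_t ‖u‖²`,
because the Hessian bound makes `∇g` strongly monotone. Hence `(C₀ + t)^{2 C C_α} ‖u(t)‖²` is
nonincreasing, which is the claimed bound after taking square roots; the power law follows from
`C₀ + t ≥ t`.
-/

open RealInnerProductSpace Set

variable {E : Type*} [NormedAddCommGroup E] [InnerProductSpace ℝ E]

theorem mul_norm_sub_sq_le_inner_sub_of_fderiv {f : E → E} {C : ℝ} (hf : Differentiable ℝ f)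
    (hf' : ∀ x z : E, C * ‖z‖ ^ 2 ≤ ⟪fderiv ℝ f x z, z⟫) (x y : E) :
    C * ‖x - y‖ ^ 2 ≤ ⟪f x - f y, x - y⟫ := by
  set v := x - y
  have hderiv : ∀ s : ℝ, HasDerivAt (fun s : ℝ => ⟪f (y + s • v), v⟫ - C * ‖v‖ ^ 2 * s)
      (⟪fderiv ℝ f (y + s • v) v, v⟫ - C * ‖v‖ ^ 2) s := by
    intro s
    have hline : HasDerivAt (fun s : ℝ => y + s • v) v s := by
      simpa using ((hasDerivAt_id s).smul_const v).const_add y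
    have hcomp := (hf (y + s • v)).hasFDerivAt.comp_hasDerivAt s hline
    have hinner :
        HasDerivAt (fun s : ℝ => ⟪f (y + s • v), v⟫) ⟪fderiv ℝ f (y + s • v) v, v⟫ s := by
      simpa using hcomp.inner ℝ (hasDerivAt_const s v)
    have h := hinner.sub ((hasDerivAt_id s).const_mul (C * ‖v‖ ^ 2))
    rwa [mul_one] at h
  have hmono : Monotone (fun s : ℝ => ⟪f (y + s • v), v⟫ - C * ‖v‖ ^ 2 * s) :=
    monotone_of_deriv_nonneg (fun s => (hderiv s).differentiableAt) fun s => by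
      rw [(hderiv s).deriv]
      linarith [hf' (y + s • v) v]
  have h01 := hmono zero_le_one
  simp only [zero_smul, add_zero, mul_zero, sub_zero, one_smul, mul_one, v,
    add_sub_cancel] at h01
  rw [inner_sub_left]
  linarith

theorem ContDiff.differentiable_gradient [CompleteSpace E] {g : E → ℝ} (hg : ContDiff ℝ 2 g) :
    Differentiable ℝ (gradient g) :=
  ((InnerProductSpace.toDual ℝ E).symm.contDiff.comp
    (hg.fderiv_right (m := 1) (by norm_num))).differentiable one_ne_zero

theorem inner_sub_neg_smul_gradient_le [CompleteSpace E] {g : E → ℝ} {C α : ℝ} {x₀ : E}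
    (hg : ContDiff ℝ 2 g) (hconv : ∀ x z : E, C * ‖z‖ ^ 2 ≤ ⟪fderiv ℝ (gradient g) x z, z⟫)
    (hcrit : gradient g x₀ = 0) (hα : 0 ≤ α) (x : E) :
    ⟪x - x₀, -(α • gradient g x)⟫ ≤ -(C * α) * ‖x - x₀‖ ^ 2 := by
  have hmono := mul_norm_sub_sq_le_inner_sub_of_fderiv hg.differentiable_gradient hconv x x₀
  rw [hcrit, sub_zero, real_inner_comm] at hmono
  rw [inner_neg_right, inner_smul_right]
  calc -(α * ⟪x - x₀, gradient g x⟫) ≤ -(α * (C * ‖x - x₀‖ ^ 2)) := by gcongr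
    _ = -(C * α) * ‖x - x₀‖ ^ 2 := by ring

/-- The integrating factor `(a + t) ^ p` makes `(a + t) ^ p * f t` antitone. -/
theorem le_div_add_rpow_mul_of_hasDerivWithinAt {f f' : ℝ → ℝ} {a p : ℝ} (ha : 0 < a)
    (hf : ∀ t ∈ Ici (0 : ℝ), HasDerivWithinAt f (f' t) (Ici 0) t)
    (hf' : ∀ t ∈ Ici (0 : ℝ), f' t ≤ -(p / (a + t)) * f t) {t : ℝ} (ht : 0 ≤ t) :
    f t ≤ (a / (a + t)) ^ p * f 0 := by
  have hpos : ∀ s ∈ Ici (0 : ℝ), 0 < a + s := fun s hs => add_pos_of_pos_of_nonneg ha hs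
  have hφ : ∀ s ∈ Ici (0 : ℝ), HasDerivWithinAt (fun s => (a + s) ^ p * f s)
      (p * (a + s) ^ (p - 1) * f s + (a + s) ^ p * f' s) (Ici 0) s := fun s hs => by
    have hbase : HasDerivWithinAt (fun s => (a + s) ^ p) (p * (a + s) ^ (p - 1)) (Ici 0) s := by
      simpa using ((hasDerivWithinAt_id s _).const_add a).rpow_const (p := p)
        (Or.inl (hpos s hs).ne')
    exact hbase.mul (hf s hs)
  have hanti : AntitoneOn (fun s => (a + s) ^ p * f s) (Ici 0) := by
    refine antitoneOn_of_hasDerivWithinAt_nonpos (convex_Ici 0)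
      (f' := fun s => p * (a + s) ^ (p - 1) * f s + (a + s) ^ p * f' s)
      (fun s hs => (hφ s hs).continuousWithinAt) (fun s hs => ?_) (fun s hs => ?_)
    · rw [interior_Ici] at hs
      exact (hφ s (Ioi_subset_Ici_self hs)).mono (by rw [interior_Ici]; exact Ioi_subset_Ici_self)
    · rw [interior_Ici] at hs
      have hs₀ := hpos s (Ioi_subset_Ici_self hs)
      have hrpow := Real.rpow_sub_one hs₀.ne' p
      calc p * (a + s) ^ (p - 1) * f s + (a + s) ^ p * f' s
          ≤ p * (a + s) ^ (p - 1) * f s + (a + s) ^ p * (-(p / (a + s)) * f s) :=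
            by gcongr; exact hf' s (Ioi_subset_Ici_self hs)
        _ = 0 := by rw [hrpow]; field_simp; ring
  have h := hanti self_mem_Ici ht ht
  simp only [add_zero] at h
  have hat := hpos t ht
  rw [Real.div_rpow ha.le hat.le, div_mul_eq_mul_div, le_div_iff₀ (Real.rpow_pos_of_pos hat p)]
  linarith

theorem norm_le_div_add_rpow_mul_of_inner_le {u u' : ℝ → E} {a q : ℝ} (ha : 0 < a)
    (hu : ∀ t ∈ Ici (0 : ℝ), HasDerivWithinAt u (u' t) (Ici 0) t)
    (hu' : ∀ t ∈ Ici (0 : ℝ), ⟪u t, u' t⟫ ≤ -(q / (a + t)) * ‖u t‖ ^ 2) {t : ℝ} (ht : 0 ≤ t) :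
    ‖u t‖ ≤ (a / (a + t)) ^ q * ‖u 0‖ := by
  have hsq : ‖u t‖ ^ 2 ≤ (a / (a + t)) ^ (q * 2) * ‖u 0‖ ^ 2 :=
    le_div_add_rpow_mul_of_hasDerivWithinAt ha (fun s hs => (hu s hs).norm_sq)
      (fun s hs => by linarith [hu' s hs, show -(q * 2 / (a + s)) * ‖u s‖ ^ 2
        = 2 * (-(q / (a + s)) * ‖u s‖ ^ 2) by ring]) ht
  have hr : 0 ≤ a / (a + t) := by positivity
  rw [Real.rpow_mul hr, Real.rpow_two, ← mul_pow] at hsq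
  exact le_of_sq_le_sq (by simpa using hsq) (by positivity)

theorem div_add_rpow_le_mul_rpow_neg {a q t : ℝ} (ha : 0 ≤ a) (hq : 0 ≤ q) (ht : 0 < t) :
    (a / (a + t)) ^ q ≤ a ^ q * t ^ (-q) := by
  calc (a / (a + t)) ^ q ≤ (a / t) ^ q := by gcongr; linarith
    _ = a ^ q * t ^ (-q) := by rw [Real.div_rpow ha ht.le, Real.rpow_neg ht.le, div_eq_mul_inv]

theorem stmt6_general (k : ℕ) (C Cα C₀ : ℝ) (hC : 0 < C) (hCα : 0 < Cα) (hC₀ : 0 < C₀)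
    (g : EuclideanSpace ℝ (Fin k) → ℝ) (hg : ContDiff ℝ 2 g)
    (hconv : ∀ θv z : EuclideanSpace ℝ (Fin k),
      C * ‖z‖ ^ 2 ≤ ⟪(fderiv ℝ (gradient g) θv) z, z⟫)
    (θstar : EuclideanSpace ℝ (Fin k)) (hcrit : gradient g θstar = 0)
    (θ : ℝ → EuclideanSpace ℝ (Fin k))
    (hθ : ∀ t ∈ Set.Ici (0 : ℝ),
      HasDerivWithinAt θ (-((Cα / (C₀ + t)) • gradient g (θ t))) (Set.Ici (0 : ℝ)) t) :
    (∀ t ∈ Set.Ici (0 : ℝ),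
      ‖θ t - θstar‖ ≤ (C₀ / (C₀ + t)) ^ (C * Cα) * ‖θ 0 - θstar‖) ∧
    ∃ K : ℝ, ∀ t ≥ (1 : ℝ), ‖θ t - θstar‖ ≤ K * t ^ (-(C * Cα)) := by
  have hdecay : ∀ t ∈ Ici (0 : ℝ),
      ‖θ t - θstar‖ ≤ (C₀ / (C₀ + t)) ^ (C * Cα) * ‖θ 0 - θstar‖ := fun t ht =>
    norm_le_div_add_rpow_mul_of_inner_le hC₀ (fun s hs => (hθ s hs).sub_const θstar)
      (fun s hs => by
        have hα : 0 ≤ Cα / (C₀ + s) := div_nonneg hCα.le (by linarith [mem_Ici.mp hs])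
        rw [mul_div_assoc]
        exact inner_sub_neg_smul_gradient_le hg hconv hcrit hα (θ s)) ht
  refine ⟨hdecay, C₀ ^ (C * Cα) * ‖θ 0 - θstar‖, fun t ht => ?_⟩
  calc ‖θ t - θstar‖ ≤ (C₀ / (C₀ + t)) ^ (C * Cα) * ‖θ 0 - θstar‖ :=
        hdecay t (by simp only [mem_Ici]; linarith)
    _ ≤ C₀ ^ (C * Cα) * t ^ (-(C * Cα)) * ‖θ 0 - θstar‖ := by
        gcongr
        exact div_add_rpow_le_mul_rpow_neg hC₀.le (by positivity) (by linarith)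
    _ = C₀ ^ (C * Cα) * ‖θ 0 - θstar‖ * t ^ (-(C * Cα)) := by ring

/-- Convergence of deterministic continuous-time gradient descent
`θ′(t) = −α_t ∇g(θ(t))`, `α_t = C_α/(C_0+t)`, for a `C`-strongly convex `C²` objective `g`
with critical point `θ*`:
`‖θ(t) − θ*‖ ≤ (C_0/(C_0+t))^{CC_α} ‖θ(0) − θ*‖`, hence `‖θ(t) − θ*‖ ≤ K t^{−CC_α}` on `[1,∞)`. -/
theorem stmt6 (k : ℕ) (hk : 1 ≤ k) (C Cα C₀ : ℝ) (hC : 0 < C) (hCα : 0 < Cα) (hC₀ : 0 < C₀)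
    (g : EuclideanSpace ℝ (Fin k) → ℝ) (hg : ContDiff ℝ 2 g)
    (hconv : ∀ θv z : EuclideanSpace ℝ (Fin k),
      C * ‖z‖ ^ 2 ≤ ⟪(fderiv ℝ (gradient g) θv) z, z⟫)
    (θstar : EuclideanSpace ℝ (Fin k)) (hcrit : gradient g θstar = 0)
    (θ : ℝ → EuclideanSpace ℝ (Fin k))
    (hθ : ∀ t ∈ Set.Ici (0 : ℝ),
      HasDerivWithinAt θ (-((Cα / (C₀ + t)) • gradient g (θ t))) (Set.Ici (0 : ℝ)) t) :
    (∀ t ∈ Set.Ici (0 : ℝ),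
      ‖θ t - θstar‖ ≤ (C₀ / (C₀ + t)) ^ (C * Cα) * ‖θ 0 - θstar‖) ∧
    ∃ K : ℝ, ∀ t ≥ (1 : ℝ), ‖θ t - θstar‖ ≤ K * t ^ (-(C * Cα)) :=
  stmt6_general k C Cα C₀ hC hCα hC₀ g hg hconv θstar hcrit θ hθ
end

section
/- Let g : ℝ^k → ℝ be continuously differentiable and let θ* ∈ ℝ^k be the unique point with ∇g(θ*) = 0. Let θ : [1, ∞) → ℝ^k be continuous and suppose ‖∇g(θ(t))‖ → 0 as t → ∞. Then either θ(t) → θ* as t → ∞, or ‖θ(t)‖ → ∞ as t → ∞. -/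
/-!
Fix `ε > 0`. If `θ` does not escape to infinity it returns infinitely often to some ball
`closedBall θ* R` with `R ≥ ε`. On the compact annulus `closedBall θ* R \ ball θ* ε` the gradient
norm has a positive minimum, so eventually `θ` avoids the annulus; the image of a tail of `θ` is
connected and hence lies entirely in `ball θ* ε` or entirely outside `closedBall θ* R`, and the
returns to the ball rule out the second case.
-/

open Filter Topology Metric Set

section Dichotomy

variable {X : Type*}

lemma IsCompact.eventually_notMem_of_tendsto_zero [TopologicalSpace X] {ι : Type*} {l : Filter ι}
    {K : Set X} (hK : IsCompact K) {f : X → ℝ} (hf : ContinuousOn f K) (hpos : ∀ x ∈ K, 0 < f x)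
    {u : ι → X} (hfu : Tendsto (f ∘ u) l (𝓝 0)) : ∀ᶠ i in l, u i ∉ K := by
  obtain ⟨m, hm, hmK⟩ := hK.exists_forall_le' hf hpos
  filter_upwards [hfu.eventually_lt_const hm] with i hi hiK
  exact (hmK _ hiK).not_gt hi

lemma ContinuousOn.eventually_mem_or_eventually_mem [TopologicalSpace X] {θ : ℝ → X} {c : ℝ}
    (hθ : ContinuousOn θ (Ici c)) {U V : Set X} (hU : IsOpen U) (hV : IsOpen V)
    (hUV : Disjoint U V) (hθUV : ∀ᶠ t in atTop, θ t ∈ U ∪ V) :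
    (∀ᶠ t in atTop, θ t ∈ U) ∨ ∀ᶠ t in atTop, θ t ∈ V := by
  obtain ⟨T, hT⟩ := eventually_atTop.1 hθUV
  have hconn : IsPreconnected (θ '' Ici (max T c)) :=
    isPreconnected_Ici.image θ (hθ.mono (Ici_subset_Ici.2 (le_max_right T c)))
  have hsub : θ '' Ici (max T c) ⊆ U ∪ V := by
    rintro _ ⟨t, ht, rfl⟩
    exact hT t ((le_max_left T c).trans ht)
  refine (hconn.subset_or_subset hU hV hUV hsub).imp ?_ ?_ <;>
    exact fun h => eventually_atTop.2 ⟨max T c, fun t ht => h ⟨t, ht, rfl⟩⟩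

theorem tendsto_nhds_or_tendsto_cocompact_of_tendsto_zero [PseudoMetricSpace X] [ProperSpace X]
    {f : X → ℝ} (hf : Continuous f) {a : X} (hpos : ∀ x ≠ a, 0 < f x) {θ : ℝ → X} {c : ℝ}
    (hθ : ContinuousOn θ (Ici c)) (hfθ : Tendsto (f ∘ θ) atTop (𝓝 0)) :
    Tendsto θ atTop (𝓝 a) ∨ Tendsto θ atTop (cocompact X) := by
  by_cases hesc : Tendsto θ atTop (cocompact X)
  · exact Or.inr hesc
  left
  obtain ⟨K, hK, hfreq⟩ : ∃ K, IsCompact K ∧ ∃ᶠ t in atTop, θ t ∈ K := by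
    simpa only [hasBasis_cocompact.tendsto_right_iff, not_forall, not_eventually, mem_compl_iff, not_not,
      exists_prop] using hesc
  refine nhds_basis_ball.tendsto_right_iff.2 fun ε hε => ?_
  obtain ⟨R, hKR⟩ := hK.isBounded.subset_closedBall a
  set B := closedBall a (max R ε)
  have hannulus : ∀ᶠ t in atTop, θ t ∉ B \ ball a ε :=
    (isCompact_closedBall a _).diff isOpen_ball |>.eventually_notMem_of_tendsto_zero
      hf.continuousOn (fun x hx => hpos x fun h => hx.2 (h ▸ mem_ball_self hε)) hfθ
  have hsplit : ∀ᶠ t in atTop, θ t ∈ ball a ε ∪ Bᶜ := hannulus.mono fun t ht => by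
    by_cases h : θ t ∈ ball a ε
    exacts [Or.inl h, Or.inr fun hB => ht ⟨hB, h⟩]
  have hdisj : Disjoint (ball a ε) Bᶜ :=
    disjoint_compl_right_iff_subset.2 (ball_subset_closedBall.trans
      (closedBall_subset_closedBall (le_max_right R ε)))
  refine (hθ.eventually_mem_or_eventually_mem isOpen_ball isClosed_closedBall.isOpen_compl hdisj
    hsplit).resolve_right fun hout => ?_
  obtain ⟨t, htK, htB⟩ := (hfreq.and_eventually hout).exists
  exact htB (closedBall_subset_closedBall (le_max_left R ε) (hKR htK))

end Dichotomy

lemma ContDiff.continuous_gradient {E : Type*} [NormedAddCommGroup E] [InnerProductSpace ℝ E]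
    [CompleteSpace E] {g : E → ℝ} (hg : ContDiff ℝ 1 g) : Continuous (gradient g) :=
  (InnerProductSpace.toDual ℝ E).symm.continuous.comp (hg.continuous_fderiv one_ne_zero)

theorem stmt10_general (k : ℕ)
    (g : EuclideanSpace ℝ (Fin k) → ℝ) (hg : ContDiff ℝ 1 g)
    (θstar : EuclideanSpace ℝ (Fin k))
    (hunique : ∀ θv : EuclideanSpace ℝ (Fin k), gradient g θv = 0 ↔ θv = θstar)
    (θ : ℝ → EuclideanSpace ℝ (Fin k)) (hθ : ContinuousOn θ (Set.Ici 1))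
    (hgrad : Filter.Tendsto (fun t => ‖gradient g (θ t)‖) Filter.atTop (nhds 0)) :
    Filter.Tendsto θ Filter.atTop (nhds θstar) ∨
      Filter.Tendsto (fun t => ‖θ t‖) Filter.atTop Filter.atTop := by
  have hpos : ∀ x ≠ θstar, 0 < ‖gradient g x‖ := fun x hx =>
    norm_pos_iff.2 fun h => hx ((hunique x).1 h)
  exact (tendsto_nhds_or_tendsto_cocompact_of_tendsto_zero hg.continuous_gradient.norm hpos hθ
    hgrad).imp_right tendsto_norm_cocompact_atTop.comp

/-- Dichotomy along a continuous path whose gradient norm vanishes: if `g`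
is `C¹` with unique critical point `θ*`, `θ` is continuous on `[1,∞)` and
`‖∇g(θ(t))‖ → 0`, then either `θ(t) → θ*` or `‖θ(t)‖ → ∞`. -/
theorem stmt10 (k : ℕ) (hk : 1 ≤ k)
    (g : EuclideanSpace ℝ (Fin k) → ℝ) (hg : ContDiff ℝ 1 g)
    (θstar : EuclideanSpace ℝ (Fin k))
    (hunique : ∀ θv : EuclideanSpace ℝ (Fin k), gradient g θv = 0 ↔ θv = θstar)
    (θ : ℝ → EuclideanSpace ℝ (Fin k)) (hθ : ContinuousOn θ (Set.Ici 1))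
    (hgrad : Filter.Tendsto (fun t => ‖gradient g (θ t)‖) Filter.atTop (nhds 0)) :
    Filter.Tendsto θ Filter.atTop (nhds θstar) ∨
      Filter.Tendsto (fun t => ‖θ t‖) Filter.atTop Filter.atTop :=
  stmt10_general k g hg θstar hunique θ hθ hgrad
end

section
/- Let g : ℝ^k → ℝ be continuously differentiable with a unique critical point θ* (i.e. θ* is the unique point with ∇g(θ*) = 0). Suppose there exists R₀ > 0 such that for every i = 1, …, k and every θ ∈ ℝ^k: ∂g/∂θ_i(θ) > 0 whenever θ_i − θ*_i > R₀, and ∂g/∂θ_i(θ) < 0 whenever θ_i − θ*_i < −R₀. Let C_α > 0, α_s = C_α/s, and let θ : [1, ∞) → ℝ^k be continuous with ‖∇g(θ(t))‖ → 0 as t → ∞ and satisfying the integral representation θ(t) = θ(1) − ∫_1^t α_s ∇g(θ(s)) ds + R(t) for all t ≥ 1, where R : [1, ∞) → ℝ^k is a function that converges to a finite limit as t → ∞. Then θ(t) → θ* as t → ∞. -/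
/-!
Write each coordinate as `θ i = F i + R i` with `F i t = θ 1 i - ∫_1^t α_s ∂_i g(θ s) ds`.
Once `R i` is within 1 of its limit, a large value of `F i` forces `θ i - θstar i > R₀`, where the
integrand is positive, so `F i` cannot climb past a fixed barrier; symmetrically it cannot fall
below one. Thus `θ` eventually stays in a compact box, and every cluster point of `θ` there is a
zero of the continuous `∇g`, i.e. `θstar`.
-/

open Filter Set MeasureTheory Topology

lemma ContinuousOn.le_max_of_nonincreasing_above {F : ℝ → ℝ} {a b M : ℝ}
    (hF : ContinuousOn F (Icc a b)) (hab : a ≤ b)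
    (hdec : ∀ c ∈ Icc a b, (∀ s ∈ Ioc c b, M < F s) → F b ≤ F c) :
    F b ≤ max (F a) M := by
  by_contra! hlt
  -- `sSup S` is the last time in `[a, b]` at which `F` is below the barrier
  set S := Icc a b ∩ F ⁻¹' Iic (max (F a) M)
  have hbdd : BddAbove S := ⟨b, fun s hs => hs.1.2⟩
  have hsup : sSup S ∈ S :=
    (hF.preimage_isClosed_of_isClosed isClosed_Icc isClosed_Iic).csSup_mem
      ⟨a, ⟨le_rfl, hab⟩, le_max_left (F a) M⟩ hbdd
  have hgt : ∀ s ∈ Ioc (sSup S) b, M < F s := fun s hs => by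
    by_contra! hle
    exact hs.1.not_ge <| le_csSup hbdd
      ⟨⟨hsup.1.1.trans hs.1.le, hs.2⟩, hle.trans (le_max_right _ _)⟩
  exact hlt.not_ge ((hdec _ hsup.1 hgt).trans hsup.2)

lemma sub_integral_le_max_of_nonneg_above {h : ℝ → ℝ} {a T t c M : ℝ}
    (hh : ContinuousOn h (Ici a)) (haT : a ≤ T) (hTt : T ≤ t)
    (hpos : ∀ s, T < s → M < c - ∫ u in a..s, h u → 0 ≤ h s) :
    c - ∫ u in a..t, h u ≤ max (c - ∫ u in a..T, h u) M := by
  have hint : ∀ x ≥ a, IntervalIntegrable h volume a x := fun x hx =>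
    (hh.mono Icc_subset_Ici_self).intervalIntegrable_of_Icc hx
  have hat : a ≤ t := haT.trans hTt
  refine ContinuousOn.le_max_of_nonincreasing_above (F := fun x => c - ∫ u in a..x, h u)
    ?_ hTt fun x hx hgt => ?_
  · have hprim := intervalIntegral.continuousOn_primitive_interval' (hint t hat) left_mem_uIcc
    rw [uIcc_of_le hat] at hprim
    exact (continuousOn_const.sub hprim).mono (Icc_subset_Icc_left haT)
  · have hsplit :=
      intervalIntegral.integral_interval_sub_left (hint t hat) (hint x (haT.trans hx.1))
    have hnonneg : 0 ≤ ∫ u in x..t, h u := by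
      rw [intervalIntegral.integral_of_le hx.2]
      exact setIntegral_nonneg measurableSet_Ioc fun s hs => hpos s (hx.1.trans_lt hs.1) (hgt s hs)
    linarith

lemma exists_eventually_le_of_eq_sub_integral_add {x h r : ℝ → ℝ} {a c ρ M : ℝ}
    (hh : ContinuousOn h (Ici a)) (hr : Tendsto r atTop (𝓝 ρ))
    (hx : ∀ t ≥ a, x t = c - (∫ s in a..t, h s) + r t)
    (hpos : ∀ s ≥ a, M < x s → 0 ≤ h s) : ∃ C, ∀ᶠ t in atTop, x t ≤ C := by
  obtain ⟨T, hT⟩ := eventually_atTop.1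
    ((hr.eventually (Ioo_mem_nhds (sub_one_lt ρ) (lt_add_one ρ))).and (eventually_ge_atTop a))
  refine ⟨max (c - ∫ s in a..T, h s) (M - ρ + 1) + (ρ + 1),
    eventually_atTop.2 ⟨T, fun t ht => ?_⟩⟩
  have hbarrier := sub_integral_le_max_of_nonneg_above (c := c) (M := M - ρ + 1) hh
    (hT T le_rfl).2 ht fun s hs hMs => by
      obtain ⟨⟨hrs, -⟩, has⟩ := hT s hs.le
      exact hpos s has (by rw [hx s has]; linarith)
  rw [hx t (hT t ht).2]
  linarith [(hT t ht).1.2]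

lemma Tendsto.of_tendsto_comp_of_eventually_mem_isCompact {ι X Y : Type*} [TopologicalSpace X]
    [TopologicalSpace Y] [T2Space Y] {f : X → Y} {x₀ : X} {y₀ : Y} {l : Filter ι} {θ : ι → X}
    {K : Set X} (hf : Continuous f) (hfib : ∀ x, f x = y₀ → x = x₀) (hK : IsCompact K)
    (hθK : ∀ᶠ i in l, θ i ∈ K) (hfθ : Tendsto (f ∘ θ) l (𝓝 y₀)) : Tendsto θ l (𝓝 x₀) :=
  hK.tendsto_nhds_of_unique_mapClusterPt hθK fun x _ hx =>
    hfib x (eq_of_nhds_neBot ((hx.continuousAt_comp hf.continuousAt).clusterPt.mono hfθ))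

lemma EuclideanSpace.intervalIntegral_apply {ι : Type*} [Fintype ι] {f : ℝ → EuclideanSpace ℝ ι}
    {a b : ℝ} (hf : IntervalIntegrable f volume a b) (i : ι) :
    (∫ s in a..b, f s) i = ∫ s in a..b, f s i :=
  ((EuclideanSpace.proj i).intervalIntegral_comp_comm hf).symm

lemma EuclideanSpace.isCompact_abs_le {ι : Type*} [Fintype ι] (C : ι → ℝ) :
    IsCompact {x : EuclideanSpace ℝ ι | ∀ i, |x i| ≤ C i} := by
  convert (EuclideanSpace.equiv ι ℝ).toHomeomorph.isCompact_preimage.2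
    (isCompact_Icc (a := -C) (b := C)) using 1
  ext x
  simp [abs_le, Pi.le_def, forall_and]

theorem stmt11_general (k : ℕ)
    (g : EuclideanSpace ℝ (Fin k) → ℝ) (hg : ContDiff ℝ 1 g)
    (θstar : EuclideanSpace ℝ (Fin k))
    (hunique : ∀ θv : EuclideanSpace ℝ (Fin k), gradient g θv = 0 ↔ θv = θstar)
    (R₀ : ℝ)
    (hin : ∀ (i : Fin k) (θv : EuclideanSpace ℝ (Fin k)),
      (R₀ < θv i - θstar i → 0 < gradient g θv i) ∧
      (θv i - θstar i < -R₀ → gradient g θv i < 0))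
    (Cα : ℝ) (hCα : 0 < Cα)
    (θ : ℝ → EuclideanSpace ℝ (Fin k)) (hθ : ContinuousOn θ (Set.Ici 1))
    (hgrad : Filter.Tendsto (fun t => ‖gradient g (θ t)‖) Filter.atTop (nhds 0))
    (R : ℝ → EuclideanSpace ℝ (Fin k))
    (hR : ∃ L, Filter.Tendsto R Filter.atTop (nhds L))
    (hrep : ∀ t ≥ (1 : ℝ),
      θ t = θ 1 - (∫ s in (1 : ℝ)..t, (Cα / s) • gradient g (θ s)) + R t) :
    Filter.Tendsto θ Filter.atTop (nhds θstar) := by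
  obtain ⟨L, hL⟩ := hR
  have hgc : Continuous (gradient g) :=
    (InnerProductSpace.toDual ℝ _).symm.continuous.comp (hg.continuous_fderiv one_ne_zero)
  have hα : ∀ s ∈ Ici (1 : ℝ), 0 < Cα / s := fun s hs => div_pos hCα (zero_lt_one.trans_le hs)
  have hαc : ContinuousOn (fun s : ℝ => Cα / s) (Ici 1) :=
    continuousOn_const.div continuousOn_id fun s hs => (zero_lt_one.trans_le hs).ne'
  have hcont : ∀ i, ContinuousOn (fun s => Cα / s * gradient g (θ s) i) (Ici 1) := fun i =>
    hαc.mul (((EuclideanSpace.proj i).continuous.comp hgc).comp_continuousOn hθ)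
  have hcoord : ∀ i, ∀ t ≥ (1 : ℝ),
      θ t i = θ 1 i - (∫ s in (1 : ℝ)..t, Cα / s * gradient g (θ s) i) + R t i := by
    intro i t ht
    have hint : IntervalIntegrable (fun s => (Cα / s) • gradient g (θ s)) volume 1 t :=
      ((hαc.smul (hgc.comp_continuousOn hθ)).mono Icc_subset_Ici_self).intervalIntegrable_of_Icc ht
    conv_lhs => rw [hrep t ht]
    simp only [PiLp.add_apply, PiLp.sub_apply, EuclideanSpace.intervalIntegral_apply hint,
      PiLp.smul_apply, smul_eq_mul]
  have hRi : ∀ i, Tendsto (fun t => R t i) atTop (𝓝 (L i)) := fun i =>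
    ((EuclideanSpace.proj i).continuous.tendsto L).comp hL
  have hupper : ∀ i, ∃ C, ∀ᶠ t in atTop, θ t i ≤ C := fun i =>
    exists_eventually_le_of_eq_sub_integral_add (hcont i) (hRi i) (hcoord i) (M := θstar i + R₀)
      fun s hs hM => (mul_pos (hα s hs) ((hin i (θ s)).1 (by linarith))).le
  have hlower : ∀ i, ∃ C, ∀ᶠ t in atTop, -θ t i ≤ C := fun i =>
    exists_eventually_le_of_eq_sub_integral_add (hcont i).neg (hRi i).neg
      (c := -θ 1 i) (M := R₀ - θstar i)
      (fun t ht => by rw [hcoord i t ht, Pi.neg_def, intervalIntegral.integral_neg]; ring)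
      fun s hs hM =>
        neg_nonneg.2 (mul_neg_of_pos_of_neg (hα s hs) ((hin i (θ s)).2 (by linarith))).le
  choose Cu hCu using hupper
  choose Cl hCl using hlower
  refine Tendsto.of_tendsto_comp_of_eventually_mem_isCompact hgc (fun x => (hunique x).1)
    (EuclideanSpace.isCompact_abs_le fun i => max (Cu i) (Cl i)) ?_
    (tendsto_zero_iff_norm_tendsto_zero.2 hgrad)
  filter_upwards [eventually_all.2 hCu, eventually_all.2 hCl] with t hu hl i
  exact abs_le.2 ⟨by linarith [hl i, le_max_right (Cu i) (Cl i)], (hu i).trans (le_max_left _ _)⟩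

/-- Pathwise convergence to the unique critical point in the non-convex case:
under the inward-pointing gradient condition outside a box of radius `R₀`, a continuous path
with `‖∇g(θ(t))‖ → 0` satisfying the integral representation
`θ(t) = θ(1) − ∫_1^t α_s ∇g(θ(s)) ds + R(t)` (with `α_s = C_α/s` and `R` convergent)
converges to `θ*`. -/
theorem stmt11 (k : ℕ) (hk : 1 ≤ k)
    (g : EuclideanSpace ℝ (Fin k) → ℝ) (hg : ContDiff ℝ 1 g)
    (θstar : EuclideanSpace ℝ (Fin k))
    (hunique : ∀ θv : EuclideanSpace ℝ (Fin k), gradient g θv = 0 ↔ θv = θstar)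
    (R₀ : ℝ) (hR₀ : 0 < R₀)
    (hin : ∀ (i : Fin k) (θv : EuclideanSpace ℝ (Fin k)),
      (R₀ < θv i - θstar i → 0 < gradient g θv i) ∧
      (θv i - θstar i < -R₀ → gradient g θv i < 0))
    (Cα : ℝ) (hCα : 0 < Cα)
    (θ : ℝ → EuclideanSpace ℝ (Fin k)) (hθ : ContinuousOn θ (Set.Ici 1))
    (hgrad : Filter.Tendsto (fun t => ‖gradient g (θ t)‖) Filter.atTop (nhds 0))
    (R : ℝ → EuclideanSpace ℝ (Fin k))
    (hR : ∃ L, Filter.Tendsto R Filter.atTop (nhds L))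
    (hrep : ∀ t ≥ (1 : ℝ),
      θ t = θ 1 - (∫ s in (1 : ℝ)..t, (Cα / s) • gradient g (θ s)) + R t) :
    Filter.Tendsto θ Filter.atTop (nhds θstar) :=
  stmt11_general k g hg θstar hunique R₀ hin Cα hCα θ hθ hgrad R hR hrep
end

section
/- Let k ≥ 1, C > 0, C_α > 0, δ ≥ 0, and set α_t = C_α/t. Let A be a symmetric real k×k matrix with zᵀ A z ≥ C‖z‖² for all z ∈ ℝ^k, and let Â : [1, ∞) → ℝ^{k×k} be continuous with zᵀ Â(u) z ≥ C‖z‖² for all z and all u ≥ 1, and ‖Â(u) − A‖ ≤ δ for all u ≥ 1. Fix s ≥ 1 and let Φ : [s, ∞) → ℝ^{k×k} be differentiable with Φ(s) = I and Φ′(t) = −α_t Â(t) Φ(t) for t ≥ s; set Φ*_{t,s} = exp(−C_α log(t/s) A). Then there exists a constant K < ∞ depending only on k and C_α (not on δ, s, t, Â) such that for all t ≥ s, ‖Φ(t) − Φ*_{t,s}‖ ≤ K δ (1 + log(t/s)) (s/t)^{C C_α}. -/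
/-!
If `W' = -ℓ • (M * W)` with `ℓ ≥ 0` and every `M` coercive with constant `C`, then
`exp (2 C Λ) ‖W‖²` is nonincreasing whenever `Λ' = ℓ`. This energy estimate gives both
`‖Φ u‖ ≤ (s / u) ^ (C Cα) ‖Φ s‖` and `‖exp (-μ A) X‖ ≤ exp (-C μ) ‖X‖`.

Along `u ↦ exp (Cα log (u / t) A) Φ u`, which runs from `exp (-Cα log (t / s) A) Φ s` at `u = s`
to `Φ t` at `u = t`, the derivative is `(Cα / u) exp (Cα log (u / t) A) (A - Â u) Φ u`. By the two
decay bounds its norm is at most `√k Cα δ (s / t) ^ (C Cα) / u`, the derivative of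
`√k Cα δ (s / t) ^ (C Cα) log (u / s)`; a fencing argument then gives the estimate with
`K = √k Cα`.
-/

attribute [local instance] Matrix.frobeniusNormedAddCommGroup Matrix.frobeniusNormedSpace

open NormedSpace

section

-- Local to this section: with it in scope, the norm in `stmt12` would elaborate differently.
attribute [local instance] Matrix.frobeniusNormedRing Matrix.frobeniusNormedAlgebra

open Set WithLp
open scoped RealInnerProductSpace

namespace Matrix

variable {m n : Type*} [Fintype m] [Fintype n]

def IsCoerciveWith (C : ℝ) (M : Matrix n n ℝ) : Prop :=
  ∀ z : EuclideanSpace ℝ n, C * ‖z‖ ^ 2 ≤ ∑ i, ∑ j, z i * M i j * z j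

def frobeniusIsometry : Matrix m n ℝ →ₗᵢ[ℝ] PiLp 2 (fun _ : m => EuclideanSpace ℝ n) where
  toFun W := toLp 2 fun i => toLp 2 (W i)
  map_add' _ _ := rfl
  map_smul' _ _ := rfl
  norm_map' _ := rfl

theorem frobeniusIsometry_apply (W : Matrix m n ℝ) :
    frobeniusIsometry W = toLp 2 fun i => toLp 2 (W i) :=
  rfl

theorem inner_frobeniusIsometry (W V : Matrix m n ℝ) :
    ⟪frobeniusIsometry W, frobeniusIsometry V⟫ = ∑ i, ∑ j, W i j * V i j := by
  simp [frobeniusIsometry_apply, PiLp.inner_apply, mul_comm]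

theorem frobenius_norm_sq_eq_sum_rows (W : Matrix m n ℝ) :
    ‖W‖ ^ 2 = ∑ i, ‖toLp 2 (W i)‖ ^ 2 :=
  PiLp.norm_sq_eq_of_L2 _ (frobeniusIsometry W)

theorem IsCoerciveWith.mul_frobenius_norm_sq_le {C : ℝ} {M : Matrix n n ℝ}
    (hM : M.IsCoerciveWith C) (W : Matrix n m ℝ) :
    C * ‖W‖ ^ 2 ≤ ⟪frobeniusIsometry W, frobeniusIsometry (M * W)⟫ := by
  rw [← frobenius_norm_transpose, frobenius_norm_sq_eq_sum_rows, Finset.mul_sum,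
    inner_frobeniusIsometry]
  calc ∑ j, C * ‖toLp 2 (Wᵀ j)‖ ^ 2
      ≤ ∑ j, ∑ i, ∑ l, W i j * M i l * W l j := Finset.sum_le_sum fun j _ => hM _
    _ = ∑ i, ∑ j, W i j * (M * W) i j := by
      simp only [mul_apply, Finset.mul_sum, mul_assoc]
      exact Finset.sum_comm

theorem norm_le_exp_mul_norm_of_coercive_flow {W : ℝ → Matrix n m ℝ} {M : ℝ → Matrix n n ℝ}
    {Λ ℓ : ℝ → ℝ} {C a b : ℝ} (hab : a ≤ b) (hM : ∀ x ∈ Icc a b, (M x).IsCoerciveWith C)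
    (hℓ : ∀ x ∈ Icc a b, 0 ≤ ℓ x) (hΛ : ∀ x ∈ Icc a b, HasDerivWithinAt Λ (ℓ x) (Icc a b) x)
    (hW : ∀ x ∈ Icc a b, HasDerivWithinAt W (-(ℓ x • (M x * W x))) (Icc a b) x) :
    ‖W b‖ ≤ Real.exp (-(C * (Λ b - Λ a))) * ‖W a‖ := by
  set e := frobeniusIsometry (m := n) (n := m)
  set G : ℝ → ℝ := fun x => Real.exp (C * Λ x) ^ 2 * ‖W x‖ ^ 2
  have hG : ∀ x ∈ Icc a b, HasDerivWithinAt G (2 * Real.exp (C * Λ x) ^ 2 * ℓ x *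
      (C * ‖W x‖ ^ 2 - ⟪e (W x), e (M x * W x)⟫)) (Icc a b) x := by
    intro x hx
    have hN := (e.toContinuousLinearMap.hasFDerivAt.comp_hasDerivWithinAt x (hW x hx)).norm_sq
    simp only [Function.comp_def, LinearIsometry.coe_toContinuousLinearMap,
      LinearIsometry.norm_map, map_neg, map_smul, inner_neg_right, real_inner_smul_right] at hN
    exact ((((hΛ x hx).const_mul C).exp.fun_pow 2).mul hN).congr_deriv (by ring)
  have hG_nonpos : ∀ x ∈ Icc a b,
      2 * Real.exp (C * Λ x) ^ 2 * ℓ x * (C * ‖W x‖ ^ 2 - ⟪e (W x), e (M x * W x)⟫) ≤ 0 :=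
    fun x hx => mul_nonpos_of_nonneg_of_nonpos (by have := hℓ x hx; positivity)
      (sub_nonpos.2 ((hM x hx).mul_frobenius_norm_sq_le (W x)))
  have hanti : AntitoneOn G (Icc a b) :=
    antitoneOn_of_hasDerivWithinAt_nonpos (convex_Icc a b)
      (fun x hx => (hG x hx).continuousWithinAt)
      (fun x hx => (hG x (interior_subset hx)).mono interior_subset)
      (fun x hx => hG_nonpos x (interior_subset hx))
  have hGba : (Real.exp (C * Λ b) * ‖W b‖) ^ 2 ≤ (Real.exp (C * Λ a) * ‖W a‖) ^ 2 := by
    simpa only [mul_pow] using hanti (left_mem_Icc.2 hab) (right_mem_Icc.2 hab) hab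
  have hweighted := (pow_le_pow_iff_left₀ (by positivity) (by positivity) two_ne_zero).1 hGba
  rw [show -(C * (Λ b - Λ a)) = C * Λ a - C * Λ b by ring, Real.exp_sub, div_mul_eq_mul_div,
    le_div_iff₀ (Real.exp_pos _), mul_comm]
  exact hweighted

variable [DecidableEq n]

theorem frobenius_norm_one : ‖(1 : Matrix n n ℝ)‖ = √(Fintype.card n) := by
  simpa using congrArg NNReal.toReal (frobenius_nnnorm_one (n := n) (α := ℝ))

theorem norm_exp_neg_smul_mul_le {C μ : ℝ} {A : Matrix n n ℝ} (hA : A.IsCoerciveWith C)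
    (X : Matrix n n ℝ) (hμ : 0 ≤ μ) : ‖exp ((-μ) • A) * X‖ ≤ Real.exp (-(C * μ)) * ‖X‖ := by
  have h := norm_le_exp_mul_norm_of_coercive_flow (W := fun ν => exp (ν • -A) * X)
    (M := fun _ => A) (Λ := id) (ℓ := fun _ => 1) hμ (fun _ _ => hA) (fun _ _ => zero_le_one)
    (fun x _ => (hasDerivAt_id x).hasDerivWithinAt) fun x _ =>
      -- `Matrix` and the Frobenius `NormedRing` provide `*` and `-` that agree only up to `rfl`
      ((hasDerivAt_exp_smul_const' (𝕂 := ℝ) (-A) x).mul_const X).hasDerivWithinAt.congr_deriv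
        (by rw [one_smul, neg_mul, neg_mul, mul_assoc]; rfl)
  simpa [neg_smul, smul_neg] using h

end Matrix

open Matrix

variable {n : Type*} [Fintype n] [DecidableEq n] {Cα C δ s : ℝ} {A : Matrix n n ℝ}
  {Ahat Φ : ℝ → Matrix n n ℝ}

theorem norm_le_exp_neg_mul_log_mul_norm (hCα : 0 ≤ Cα) (hs : 0 < s)
    (hAhat : ∀ u ∈ Ici s, (Ahat u).IsCoerciveWith C)
    (hΦ : ∀ u ∈ Ici s, HasDerivWithinAt Φ (-((Cα / u) • (Ahat u * Φ u))) (Ici s) u)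
    {u : ℝ} (hu : s ≤ u) :
    ‖Φ u‖ ≤ Real.exp (-(C * (Cα * Real.log u - Cα * Real.log s))) * ‖Φ s‖ :=
  norm_le_exp_mul_norm_of_coercive_flow (Λ := fun x => Cα * Real.log x) (ℓ := fun x => Cα / x)
    hu (fun x hx => hAhat x hx.1) (fun _ hx => div_nonneg hCα (hs.trans_le hx.1).le)
    (fun _ hx => ((Real.hasDerivAt_log (hs.trans_le hx.1).ne').const_mul Cα).hasDerivWithinAt)
    (fun x hx => (hΦ x hx.1).mono Icc_subset_Ici_self)

theorem hasDerivWithinAt_exp_smul_mul {t u : ℝ} {S : Set ℝ} (hu : 0 < u)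
    (hΦu : HasDerivWithinAt Φ (-((Cα / u) • (Ahat u * Φ u))) S u) :
    HasDerivWithinAt (fun x => exp ((Cα * Real.log x - Cα * Real.log t) • A) * Φ x)
      ((Cα / u) • (exp ((Cα * Real.log u - Cα * Real.log t) • A) * ((A - Ahat u) * Φ u))) S u := by
  have hL : HasDerivAt (fun x => Cα * Real.log x - Cα * Real.log t) (Cα / u) u :=
    ((Real.hasDerivAt_log hu.ne').const_mul Cα).sub_const _
  have hE := (hasDerivAt_exp_smul_const (𝕂 := ℝ) A _).scomp u hL
  refine (hE.hasDerivWithinAt.mul hΦu).congr_deriv ?_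
  simp only [smul_mul_assoc, mul_neg, mul_smul_comm, ← sub_eq_add_neg, ← smul_sub, mul_sub,
    sub_mul, mul_assoc, Function.comp_apply]
  rfl

theorem norm_exp_smul_mul_sub_mul_le (hCα : 0 ≤ Cα) (hs : 0 < s) (hA : A.IsCoerciveWith C)
    (hAhat : ∀ u ∈ Ici s, (Ahat u).IsCoerciveWith C) (hδ : ∀ u ∈ Ici s, ‖Ahat u - A‖ ≤ δ)
    (hΦ : ∀ u ∈ Ici s, HasDerivWithinAt Φ (-((Cα / u) • (Ahat u * Φ u))) (Ici s) u)
    {u t : ℝ} (hu : s ≤ u) (hut : u ≤ t) :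
    ‖exp ((-(Cα * Real.log t - Cα * Real.log u)) • A) * ((A - Ahat u) * Φ u)‖ ≤
      δ * Real.exp (-(C * (Cα * Real.log t - Cα * Real.log s))) * ‖Φ s‖ := by
  have hμ : 0 ≤ Cα * Real.log t - Cα * Real.log u :=
    sub_nonneg.2 (mul_le_mul_of_nonneg_left (Real.log_le_log (hs.trans_le hu) hut) hCα)
  have hAu : ‖A - Ahat u‖ ≤ δ := norm_sub_rev A (Ahat u) ▸ hδ u hu
  have hexp : Real.exp (-(C * (Cα * Real.log t - Cα * Real.log u))) *
      Real.exp (-(C * (Cα * Real.log u - Cα * Real.log s))) =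
        Real.exp (-(C * (Cα * Real.log t - Cα * Real.log s))) := by
    rw [← Real.exp_add]; ring_nf
  calc _ ≤ Real.exp (-(C * (Cα * Real.log t - Cα * Real.log u))) * (‖A - Ahat u‖ * ‖Φ u‖) :=
        (norm_exp_neg_smul_mul_le hA _ hμ).trans (by gcongr; exact norm_mul_le _ _)
    _ ≤ Real.exp (-(C * (Cα * Real.log t - Cα * Real.log u))) *
          (δ * (Real.exp (-(C * (Cα * Real.log u - Cα * Real.log s))) * ‖Φ s‖)) := by
        gcongr
        · exact (norm_nonneg _).trans hAu
        · exact norm_le_exp_neg_mul_log_mul_norm hCα hs hAhat hΦ hu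
    _ = _ := by rw [← hexp]; ring

theorem norm_sub_exp_smul_mul_le (hCα : 0 ≤ Cα) (hs : 0 < s) (hA : A.IsCoerciveWith C)
    (hAhat : ∀ u ∈ Ici s, (Ahat u).IsCoerciveWith C) (hδ : ∀ u ∈ Ici s, ‖Ahat u - A‖ ≤ δ)
    (hΦ : ∀ u ∈ Ici s, HasDerivWithinAt Φ (-((Cα / u) • (Ahat u * Φ u))) (Ici s) u)
    {t : ℝ} (ht : s ≤ t) :
    ‖Φ t - exp ((-(Cα * Real.log (t / s))) • A) * Φ s‖ ≤
      Cα * δ * ‖Φ s‖ * Real.log (t / s) * (s / t) ^ (C * Cα) := by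
  have hpos : ∀ u ∈ Ici s, 0 < u := fun u hu => hs.trans_le hu
  set L : ℝ → ℝ := fun u => Cα * Real.log u - Cα * Real.log t
  set f : ℝ → Matrix n n ℝ := fun u => exp (L u • A) * Φ u
  set f' : ℝ → Matrix n n ℝ := fun u => (Cα / u) • (exp (L u • A) * ((A - Ahat u) * Φ u))
  set c := Cα * δ * ‖Φ s‖ * Real.exp (-(C * (Cα * Real.log t - Cα * Real.log s))) with hc
  have hf : ∀ u ∈ Ici s, HasDerivWithinAt f (f' u) (Ici s) u := fun u hu =>
    hasDerivWithinAt_exp_smul_mul (hs.trans_le hu) (hΦ u hu)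
  have hf'_le : ∀ u ∈ Icc s t, ‖f' u‖ ≤ c * u⁻¹ := by
    rintro u ⟨hu, hut⟩
    have hCαu : 0 ≤ Cα / u := div_nonneg hCα (hpos u hu).le
    have hLu : L u = -(Cα * Real.log t - Cα * Real.log u) := by ring
    calc ‖f' u‖ = Cα / u * ‖exp (L u • A) * ((A - Ahat u) * Φ u)‖ := by
          rw [norm_smul, Real.norm_of_nonneg hCαu]
      _ ≤ Cα / u * (δ * Real.exp (-(C * (Cα * Real.log t - Cα * Real.log s))) * ‖Φ s‖) := by
          rw [hLu]
          gcongr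
          exact norm_exp_smul_mul_sub_mul_le hCα hs hA hAhat hδ hΦ hu hut
      _ = c * u⁻¹ := by rw [hc]; ring
  have hlog : ∀ u ∈ Ici s, HasDerivAt (fun x => c * (Real.log x - Real.log s)) (c * u⁻¹) u :=
    fun u hu => ((Real.hasDerivAt_log (hpos u hu).ne').sub_const _).const_mul c
  have hfence := image_norm_le_of_norm_deriv_right_le_deriv_boundary'
    (f := fun u => f u - f s) (B := fun u => c * (Real.log u - Real.log s))
    (fun u hu => ((hf u hu.1).continuousWithinAt.mono Icc_subset_Ici_self).sub
      continuousWithinAt_const)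
    (fun u hu => ((hf u hu.1).mono (Ici_subset_Ici.2 hu.1)).sub_const _) (by simp)
    (fun u hu => (hlog u hu.1).continuousAt.continuousWithinAt)
    (fun u hu => (hlog u hu.1).hasDerivWithinAt)
    (fun u hu => hf'_le u (Ico_subset_Icc_self hu)) (right_mem_Icc.2 ht)
  have hLt : L t = 0 := sub_self _
  have hLs : L s = -(Cα * Real.log (t / s)) := by
    rw [Real.log_div (hpos t ht).ne' hs.ne']; ring
  have hrpow : (s / t) ^ (C * Cα) = Real.exp (-(C * (Cα * Real.log t - Cα * Real.log s))) := by
    rw [Real.rpow_def_of_pos (div_pos hs (hpos t ht)), Real.log_div hs.ne' (hpos t ht).ne']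
    ring_nf
  simp only [f, hLt, hLs, zero_smul, exp_zero, one_mul] at hfence
  refine hfence.trans_eq ?_
  rw [hc, hrpow, Real.log_div (hpos t ht).ne' hs.ne']
  ring

end

theorem stmt12_general (k : ℕ) (Cα : ℝ) (hCα : 0 < Cα) :
    ∃ K : ℝ, ∀ (C : ℝ), 0 < C → ∀ (δ : ℝ), 0 ≤ δ →
      ∀ A : Matrix (Fin k) (Fin k) ℝ, A.IsSymm →
      (∀ z : EuclideanSpace ℝ (Fin k), C * ‖z‖ ^ 2 ≤ ∑ i, ∑ j, z i * A i j * z j) →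
      ∀ Ahat : ℝ → Matrix (Fin k) (Fin k) ℝ, ContinuousOn Ahat (Set.Ici 1) →
      (∀ u ∈ Set.Ici (1 : ℝ), ∀ z : EuclideanSpace ℝ (Fin k),
        C * ‖z‖ ^ 2 ≤ ∑ i, ∑ j, z i * Ahat u i j * z j) →
      (∀ u ∈ Set.Ici (1 : ℝ), ‖Ahat u - A‖ ≤ δ) →
      ∀ s : ℝ, 1 ≤ s →
      ∀ Φ : ℝ → Matrix (Fin k) (Fin k) ℝ, Φ s = 1 →
      (∀ t ∈ Set.Ici s, HasDerivWithinAt Φ (-((Cα / t) • (Ahat t * Φ t))) (Set.Ici s) t) →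
      ∀ t ∈ Set.Ici s,
        ‖Φ t - exp ((-(Cα * Real.log (t / s))) • A)‖ ≤
          K * δ * (1 + Real.log (t / s)) * (s / t) ^ (C * Cα) := by
  refine ⟨Cα * √k, fun C _ δ hδ A _ hA Ahat _ hAhat hAδ s hs Φ hΦs hΦ t ht => ?_⟩
  have hspos : 0 < s := by linarith
  have hduhamel := norm_sub_exp_smul_mul_le hCα.le hspos hA
    (fun u hu => hAhat u (hs.trans hu)) (fun u hu => hAδ u (hs.trans hu)) hΦ ht
  rw [hΦs, mul_one, Matrix.frobenius_norm_one, Fintype.card_fin] at hduhamel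
  have hdecay : 0 ≤ (s / t) ^ (C * Cα) := Real.rpow_nonneg (div_pos hspos (hspos.trans_le ht)).le _
  calc _ ≤ Cα * √k * δ * Real.log (t / s) * (s / t) ^ (C * Cα) := hduhamel.trans_eq (by ring)
    _ ≤ Cα * √k * δ * (1 + Real.log (t / s)) * (s / t) ^ (C * Cα) := by
      gcongr
      linarith

/-- Duhamel-type perturbation estimate: there is a constant `K` depending
only on `k` and `C_α` such that if `Â(u)` is uniformly `C`-positive and `δ`-close to the
`C`-positive symmetric matrix `A`, then the fundamental solution `Φ` of
`Φ′(t) = −(C_α/t) Â(t) Φ(t)`, `Φ(s) = I`, satisfies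
`‖Φ(t) − exp(−C_α log(t/s) A)‖ ≤ K δ (1 + log(t/s)) (s/t)^{CC_α}` for all `t ≥ s ≥ 1`. -/
theorem stmt12 (k : ℕ) (hk : 1 ≤ k) (Cα : ℝ) (hCα : 0 < Cα) :
    ∃ K : ℝ, ∀ (C : ℝ), 0 < C → ∀ (δ : ℝ), 0 ≤ δ →
      ∀ A : Matrix (Fin k) (Fin k) ℝ, A.IsSymm →
      (∀ z : EuclideanSpace ℝ (Fin k), C * ‖z‖ ^ 2 ≤ ∑ i, ∑ j, z i * A i j * z j) →
      ∀ Ahat : ℝ → Matrix (Fin k) (Fin k) ℝ, ContinuousOn Ahat (Set.Ici 1) →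
      (∀ u ∈ Set.Ici (1 : ℝ), ∀ z : EuclideanSpace ℝ (Fin k),
        C * ‖z‖ ^ 2 ≤ ∑ i, ∑ j, z i * Ahat u i j * z j) →
      (∀ u ∈ Set.Ici (1 : ℝ), ‖Ahat u - A‖ ≤ δ) →
      ∀ s : ℝ, 1 ≤ s →
      ∀ Φ : ℝ → Matrix (Fin k) (Fin k) ℝ, Φ s = 1 →
      (∀ t ∈ Set.Ici s, HasDerivWithinAt Φ (-((Cα / t) • (Ahat t * Φ t))) (Set.Ici s) t) →
      ∀ t ∈ Set.Ici s,
        ‖Φ t - exp ((-(Cα * Real.log (t / s))) • A)‖ ≤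
          K * δ * (1 + Real.log (t / s)) * (s / t) ^ (C * Cα) :=
  stmt12_general k Cα hCα
end

section
/- Let (Ω, F, P) be a probability space, k ≥ 1, and let Σ be a symmetric positive definite real k×k matrix. Let (Z_t)_{t ≥ 1} be a family of ℝ^k-valued random vectors on Ω. Suppose that for every η > 0 there exists a family (Z̃^η_t)_{t ≥ 1} of ℝ^k-valued random vectors on Ω such that, as t → ∞, the law of Z̃^η_t converges weakly to the centered Gaussian measure on ℝ^k with covariance η² Σ, and the law of Z_t + Z̃^η_t also converges weakly to the centered Gaussian measure with covariance η² Σ. Then Z_t → 0 in probability as t → ∞, i.e. for every ε > 0, P(‖Z_t‖ > ε) → 0. -/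
open MeasureTheory Filter

/-- `μ` is the centered Gaussian measure on `ℝ^k` with covariance matrix `S`: it is a
probability measure all of whose one-dimensional projections `L` are real Gaussian with mean
`0` and variance `vᵀ S v`, where `v` is the vector representing `L`. -/
def IsCenteredGaussianWithCov {k : ℕ} (μ : Measure (EuclideanSpace ℝ (Fin k)))
    (S : Matrix (Fin k) (Fin k) ℝ) : Prop :=
  IsProbabilityMeasure μ ∧
    ∀ L : EuclideanSpace ℝ (Fin k) →L[ℝ] ℝ,
      μ.map L = ProbabilityTheory.gaussianReal 0
        (Real.toNNReal (∑ i, ∑ j,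
          L (EuclideanSpace.single i 1) * S i j * L (EuclideanSpace.single j 1)))

/-- The family of measures `ν t` converges weakly, as `t → ∞`, to the measure `μ`:
integrals of bounded continuous functions converge. -/
def TendstoWeaklyAtTop {k : ℕ} (ν : ℝ → Measure (EuclideanSpace ℝ (Fin k)))
    (μ : Measure (EuclideanSpace ℝ (Fin k))) : Prop :=
  ∀ f : BoundedContinuousFunction (EuclideanSpace ℝ (Fin k)) ℝ,
    Tendsto (fun t => ∫ x, f x ∂(ν t)) atTop (nhds (∫ x, f x ∂μ))

/-!
Chebyshev's inequality, applied to the second moment `∫ ‖x‖² = η² ∑ᵢ max Σᵢᵢ 0` of the centered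
Gaussian with covariance `η²Σ` (read off its coordinate marginals), makes the Gaussian mass
of `{‖x‖ ≥ ε/2}` smaller than `δ/2` once `η` is small. This set is closed, so by the
portmanteau theorem the laws of `Z̃^η_t` and of `Z_t + Z̃^η_t` eventually give it mass
`< δ/2` too, and `‖Z_t‖ > ε` forces `‖Z_t + Z̃^η_t‖ ≥ ε/2` or `‖Z̃^η_t‖ ≥ ε/2`.
-/

open ProbabilityTheory Topology ENNReal
open scoped NNReal

lemma TendstoWeaklyAtTop.eventually_measure_lt {k : ℕ}
    {ν : ℝ → Measure (EuclideanSpace ℝ (Fin k))} {μ : Measure (EuclideanSpace ℝ (Fin k))}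
    [∀ t, IsProbabilityMeasure (ν t)] [IsProbabilityMeasure μ] (h : TendstoWeaklyAtTop ν μ)
    {F : Set (EuclideanSpace ℝ (Fin k))} (hF : IsClosed F) {c : ℝ≥0∞} (hc : μ F < c) :
    ∀ᶠ t in atTop, ν t F < c := by
  let νP : ℝ → ProbabilityMeasure (EuclideanSpace ℝ (Fin k)) := fun t => ⟨ν t, inferInstance⟩
  have hlim : Tendsto νP atTop (𝓝 ⟨μ, inferInstance⟩) :=
    ProbabilityMeasure.tendsto_iff_forall_integral_tendsto.2 h
  exact eventually_lt_of_limsup_lt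
    ((ProbabilityMeasure.limsup_measure_closed_le_of_tendsto hlim hF).trans_lt hc)

lemma lintegral_enorm_sq_gaussianReal_zero (v : ℝ≥0) :
    ∫⁻ y, ‖y‖ₑ ^ 2 ∂gaussianReal 0 v = v := by
  have h := ofReal_variance (memLp_id_gaussianReal (μ := 0) (v := v) 2)
  rw [variance_id_gaussianReal, evariance] at h
  simpa [integral_id_gaussianReal] using h.symm

lemma EuclideanSpace.enorm_sq_eq {ι : Type*} [Fintype ι] (x : EuclideanSpace ℝ ι) :
    ‖x‖ₑ ^ 2 = ∑ i, ‖x i‖ₑ ^ 2 := by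
  simp only [enorm_eq_nnnorm, EuclideanSpace.nnnorm_eq, ← ENNReal.coe_pow, NNReal.sq_sqrt,
    ENNReal.ofNNReal_finsetSum]

lemma ofReal_sq_mul_measure_le_lintegral_enorm_sq {E : Type*} [NormedAddCommGroup E]
    [MeasurableSpace E] [OpensMeasurableSpace E] (μ : Measure E) (a : ℝ) :
    ENNReal.ofReal a ^ 2 * μ {x | a ≤ ‖x‖} ≤ ∫⁻ x, ‖x‖ₑ ^ 2 ∂μ := by
  refine le_trans ?_ (mul_meas_ge_le_lintegral₀ (by fun_prop) (ENNReal.ofReal a ^ 2))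
  refine mul_le_mul_right (measure_mono fun x (hx : a ≤ ‖x‖) => ?_) _
  change ENNReal.ofReal a ^ 2 ≤ ‖x‖ₑ ^ 2
  rw [← ofReal_norm]
  exact pow_le_pow_left₀ bot_le (ENNReal.ofReal_le_ofReal hx) 2

lemma IsCenteredGaussianWithCov.map_proj {k : ℕ} {μ : Measure (EuclideanSpace ℝ (Fin k))}
    {S : Matrix (Fin k) (Fin k) ℝ} (hμ : IsCenteredGaussianWithCov μ S) (i : Fin k) :
    μ.map (EuclideanSpace.proj i) = gaussianReal 0 (S i i).toNNReal := by
  rw [hμ.2]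
  simp [ite_mul, mul_ite]

lemma IsCenteredGaussianWithCov.lintegral_enorm_sq {k : ℕ}
    {μ : Measure (EuclideanSpace ℝ (Fin k))} {S : Matrix (Fin k) (Fin k) ℝ}
    (hμ : IsCenteredGaussianWithCov μ S) :
    ∫⁻ x, ‖x‖ₑ ^ 2 ∂μ = ∑ i, ENNReal.ofReal (S i i) := by
  simp_rw [EuclideanSpace.enorm_sq_eq]
  rw [lintegral_finsetSum _ fun i _ => by fun_prop]
  refine Finset.sum_congr rfl fun i _ => ?_
  change _ = ((S i i).toNNReal : ℝ≥0∞)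
  rw [← lintegral_enorm_sq_gaussianReal_zero, ← hμ.map_proj i,
    lintegral_map (by fun_prop) (EuclideanSpace.proj i).continuous.measurable]
  rfl

lemma exists_pos_forall_gaussian_measure_norm_ge_lt {k : ℕ} (S : Matrix (Fin k) (Fin k) ℝ)
    {a : ℝ} (ha : 0 < a) {δ : ℝ≥0∞} (hδ : 0 < δ) :
    ∃ η : ℝ, 0 < η ∧ ∀ μ : Measure (EuclideanSpace ℝ (Fin k)),
      IsCenteredGaussianWithCov μ ((η ^ 2) • S) → μ {x | a ≤ ‖x‖} < δ := by
  set C := ∑ i, ENNReal.ofReal (S i i)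
  have hbound : ∀ η μ, IsCenteredGaussianWithCov μ ((η ^ 2) • S) →
      ENNReal.ofReal a ^ 2 * μ {x | a ≤ ‖x‖} ≤ ENNReal.ofReal (η ^ 2) * C := by
    intro η μ hμ
    refine (ofReal_sq_mul_measure_le_lintegral_enorm_sq μ a).trans_eq ?_
    simp [hμ.lintegral_enorm_sq, C, Finset.mul_sum, ENNReal.ofReal_mul (sq_nonneg η)]
  have hlim : Tendsto (fun η : ℝ => ENNReal.ofReal (η ^ 2) * C) (𝓝[>] 0) (𝓝 0) := by
    have hC : C ≠ ∞ := ENNReal.sum_ne_top.2 fun _ _ => ofReal_ne_top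
    have h0 : Tendsto (fun η : ℝ => ENNReal.ofReal (η ^ 2)) (𝓝 0) (𝓝 0) :=
      (ENNReal.continuous_ofReal.comp (continuous_pow 2)).tendsto' 0 0 (by simp)
    simpa using (ENNReal.Tendsto.mul_const h0 (Or.inr hC)).mono_left nhdsWithin_le_nhds
  have hpos : 0 < ENNReal.ofReal a ^ 2 * δ := by positivity
  obtain ⟨η, hsmall, hη⟩ :=
    ((hlim.eventually (gt_mem_nhds hpos)).and self_mem_nhdsWithin).exists
  refine ⟨η, hη, fun μ hμ => ?_⟩
  have ha' : ENNReal.ofReal a ^ 2 ≠ 0 := by positivity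
  exact (ENNReal.mul_lt_mul_iff_right ha' (by simp)).1 ((hbound η μ hμ).trans_lt hsmall)

lemma measure_norm_gt_le_add {Ω E : Type*} [MeasurableSpace Ω] [SeminormedAddCommGroup E]
    (P : Measure Ω) (X Y : Ω → E) (ε : ℝ) :
    P {ω | ε < ‖X ω‖} ≤ P {ω | ε / 2 ≤ ‖X ω + Y ω‖} + P {ω | ε / 2 ≤ ‖Y ω‖} := by
  refine (measure_mono fun ω (hω : ε < ‖X ω‖) => ?_).trans (measure_union_le _ _)
  by_cases hXY : ε / 2 ≤ ‖X ω + Y ω‖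
  · exact Or.inl hXY
  · refine Or.inr (show ε / 2 ≤ ‖Y ω‖ from ?_)
    have := norm_sub_le (X ω + Y ω) (Y ω)
    rw [add_sub_cancel_right] at this
    linarith

theorem stmt14_general {Ω : Type*} [MeasurableSpace Ω] (P : Measure Ω) [IsProbabilityMeasure P]
    (k : ℕ)
    (S : Matrix (Fin k) (Fin k) ℝ)
    (Z : ℝ → Ω → EuclideanSpace ℝ (Fin k)) (hZ : ∀ t, Measurable (Z t))
    (h : ∀ η : ℝ, 0 < η →
      ∃ Zt : ℝ → Ω → EuclideanSpace ℝ (Fin k),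
        (∀ t, Measurable (Zt t)) ∧
        ∃ μη : Measure (EuclideanSpace ℝ (Fin k)),
          IsCenteredGaussianWithCov μη ((η ^ 2) • S) ∧
          TendstoWeaklyAtTop (fun t => P.map (Zt t)) μη ∧
          TendstoWeaklyAtTop (fun t => P.map (fun ω => Z t ω + Zt t ω)) μη) :
    ∀ ε > (0 : ℝ), Tendsto (fun t => P {ω | ε < ‖Z t ω‖}) atTop (nhds 0) := by
  intro ε hε
  rw [ENNReal.tendsto_nhds_zero]
  intro δ hδ
  obtain ⟨η, hη, htail⟩ :=
    exists_pos_forall_gaussian_measure_norm_ge_lt S (half_pos hε) (ENNReal.half_pos hδ.ne')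
  obtain ⟨Zt, hZt, μ, hμ, hlaw, hlaw_sum⟩ := h η hη
  have hμ_prob := hμ.1
  have hsum : ∀ t, Measurable fun ω => Z t ω + Zt t ω := fun t => (hZ t).add (hZt t)
  have hlaw_prob t := Measure.isProbabilityMeasure_map (μ := P) (hZt t).aemeasurable
  have hlaw_sum_prob t := Measure.isProbabilityMeasure_map (μ := P) (hsum t).aemeasurable
  have hF : IsClosed {x : EuclideanSpace ℝ (Fin k) | ε / 2 ≤ ‖x‖} :=
    isClosed_le continuous_const continuous_norm
  filter_upwards [hlaw.eventually_measure_lt hF (htail μ hμ),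
    hlaw_sum.eventually_measure_lt hF (htail μ hμ)] with t h1 h2
  rw [Measure.map_apply (hZt t) hF.measurableSet] at h1
  rw [Measure.map_apply (hsum t) hF.measurableSet] at h2
  calc P {ω | ε < ‖Z t ω‖}
      ≤ P {ω | ε / 2 ≤ ‖Z t ω + Zt t ω‖} + P {ω | ε / 2 ≤ ‖Zt t ω‖} :=
        measure_norm_gt_le_add P (Z t) (Zt t) ε
    _ ≤ δ / 2 + δ / 2 := add_le_add h2.le h1.le
    _ = δ := ENNReal.add_halves δ

/-- If for every `η > 0` there are random vectors `Z̃^η_t` whose laws converge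
weakly to the centered Gaussian with covariance `η²Σ`, and such that the laws of `Z_t + Z̃^η_t`
converge weakly to the same Gaussian, then `Z_t → 0` in probability. -/
theorem stmt14 {Ω : Type*} [MeasurableSpace Ω] (P : Measure Ω) [IsProbabilityMeasure P]
    (k : ℕ) (hk : 1 ≤ k)
    (S : Matrix (Fin k) (Fin k) ℝ) (hS : S.PosDef)
    (Z : ℝ → Ω → EuclideanSpace ℝ (Fin k)) (hZ : ∀ t, Measurable (Z t))
    (h : ∀ η : ℝ, 0 < η →
      ∃ Zt : ℝ → Ω → EuclideanSpace ℝ (Fin k),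
        (∀ t, Measurable (Zt t)) ∧
        ∃ μη : Measure (EuclideanSpace ℝ (Fin k)),
          IsCenteredGaussianWithCov μη ((η ^ 2) • S) ∧
          TendstoWeaklyAtTop (fun t => P.map (Zt t)) μη ∧
          TendstoWeaklyAtTop (fun t => P.map (fun ω => Z t ω + Zt t ω)) μη) :
    ∀ ε > (0 : ℝ), Tendsto (fun t => P {ω | ε < ‖Z t ω‖}) atTop (nhds 0) :=
  stmt14_general P k S Z hZ h
end
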